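/- arXiv:1512.04165 — 4 statements merged into one kernel-verified Lean document; each statement's English description precedes it below -/
import Mathlib

section
/- Let L, Z : [0, r*] → ℝ be continuous, b > 0, a ≥ 0, with L(r) ≥ L(0) − a·r + b·∫₀^r ∫₀^s L(t) dt ds for all r, and Z(r) = Z(0) − a·r + b·∫₀^r ∫₀^s Z(t) dt ds with Z(0) = L(0). Then L(r) ≥ Z(r) for all r ∈ [0, r*]. -/
/-!
The difference `W = L - Z` is continuous and satisfies `b * ∫₀^r ∫₀^s W ≤ W r`. Starting from
the minimum `m` of `W`, integrating this inequality twice at a time gives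
`W r ≥ m * (b r²)ⁿ / (2n)!` for every `n`, and the right-hand side tends to `0`.
-/

open MeasureTheory Set Filter Topology intervalIntegral Nat

lemma integral_pow_div_factorial (k : ℕ) (s : ℝ) :
    ∫ u in (0:ℝ)..s, u ^ k / k ! = s ^ (k + 1) / (k + 1)! := by
  rw [intervalIntegral.integral_div, integral_pow, Nat.factorial_succ]
  push_cast
  field_simp
  ring

lemma tendsto_pow_div_factorial_two_mul (x : ℝ) :
    Tendsto (fun n : ℕ => x ^ n / (2 * n)!) atTop (𝓝 0) := by
  refine squeeze_zero_norm (fun n => ?_) (FloorSemiring.tendsto_pow_div_factorial_atTop |x|)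
  rw [norm_div, norm_pow, Real.norm_eq_abs, Real.norm_natCast]
  gcongr
  omega

section Icc

variable {f : ℝ → ℝ} {R r : ℝ}

lemma ContinuousOn.intervalIntegrable_of_mem_Icc (hf : ContinuousOn f (Icc 0 R))
    (hr : r ∈ Icc 0 R) : IntervalIntegrable f volume 0 r :=
  (hf.mono (uIcc_subset_Icc (left_mem_Icc.2 (hr.1.trans hr.2)) hr)).intervalIntegrable

lemma ContinuousOn.primitive (hf : ContinuousOn f (Icc 0 R)) :
    ContinuousOn (fun x => ∫ t in (0:ℝ)..x, f t) (Icc 0 R) := by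
  rcases le_or_gt 0 R with hR | hR
  · rw [← uIcc_of_le hR] at hf ⊢
    exact continuousOn_primitive_interval (hf.integrableOn_compact isCompact_uIcc)
  · simp [Icc_eq_empty_of_lt hR]

lemma pow_div_factorial_le_primitive {c : ℝ} {k : ℕ} (hf : ContinuousOn f (Icc 0 R))
    (hle : ∀ t ∈ Icc 0 R, c * (t ^ k / k !) ≤ f t) :
    ∀ t ∈ Icc 0 R, c * (t ^ (k + 1) / (k + 1)!) ≤ ∫ s in (0:ℝ)..t, f s := by
  intro t ht
  rw [← integral_pow_div_factorial, ← intervalIntegral.integral_const_mul]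
  refine integral_mono_on ht.1 ((by fun_prop : Continuous _).intervalIntegrable _ _)
    (hf.intervalIntegrable_of_mem_Icc ht) fun s hs => hle s ⟨hs.1, hs.2.trans ht.2⟩

lemma double_integral_sub (hf : ContinuousOn f (Icc 0 R)) {g : ℝ → ℝ}
    (hg : ContinuousOn g (Icc 0 R)) (hr : r ∈ Icc 0 R) :
    ∫ s in (0:ℝ)..r, ∫ t in (0:ℝ)..s, (f t - g t) =
      (∫ s in (0:ℝ)..r, ∫ t in (0:ℝ)..s, f t) - ∫ s in (0:ℝ)..r, ∫ t in (0:ℝ)..s, g t := by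
  rw [← integral_sub (hf.primitive.intervalIntegrable_of_mem_Icc hr)
    (hg.primitive.intervalIntegrable_of_mem_Icc hr)]
  refine integral_congr fun s hs => ?_
  have hsR : s ∈ Icc 0 R := Icc_subset_Icc_right hr.2 (uIcc_of_le hr.1 ▸ hs)
  exact integral_sub (hf.intervalIntegrable_of_mem_Icc hsR) (hg.intervalIntegrable_of_mem_Icc hsR)

end Icc

lemma nonneg_of_le_double_integral {W : ℝ → ℝ} {R b : ℝ} (hb : 0 ≤ b)
    (hW : ContinuousOn W (Icc 0 R))
    (hle : ∀ r ∈ Icc 0 R, b * ∫ s in (0:ℝ)..r, ∫ t in (0:ℝ)..s, W t ≤ W r) :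
    ∀ r ∈ Icc 0 R, 0 ≤ W r := by
  intro r hr
  obtain ⟨r₀, -, hmin⟩ := isCompact_Icc.exists_isMinOn (nonempty_Icc.2 (hr.1.trans hr.2)) hW
  set m := W r₀
  have hiter : ∀ n : ℕ, ∀ t ∈ Icc 0 R, m * b ^ n * (t ^ (2 * n) / (2 * n)!) ≤ W t := by
    intro n
    induction n with
    | zero => simpa using fun t ht => hmin ht
    | succ n ih =>
      intro t ht
      have hinner := pow_div_factorial_le_primitive hW ih
      have houter := pow_div_factorial_le_primitive hW.primitive hinner t ht
      calc m * b ^ (n + 1) * (t ^ (2 * (n + 1)) / (2 * (n + 1))!)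
          = b * (m * b ^ n * (t ^ (2 * n + 1 + 1) / (2 * n + 1 + 1)!)) := by ring_nf
        _ ≤ b * ∫ s in (0:ℝ)..t, ∫ u in (0:ℝ)..s, W u := by gcongr
        _ ≤ W t := hle t ht
  have hlim : Tendsto (fun n : ℕ => m * ((b * r ^ 2) ^ n / (2 * n)!)) atTop (𝓝 0) := by
    simpa using (tendsto_pow_div_factorial_two_mul (b * r ^ 2)).const_mul m
  refine le_of_tendsto' hlim fun n => ?_
  calc m * ((b * r ^ 2) ^ n / (2 * n)!) = m * b ^ n * (r ^ (2 * n) / (2 * n)!) := by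
        rw [mul_pow, ← pow_mul]; ring
    _ ≤ W r := hiter n r hr

theorem stmt4_general (rstar a b : ℝ) (hb : 0 < b)
    (L Z : ℝ → ℝ)
    (hL : ContinuousOn L (Icc 0 rstar)) (hZ : ContinuousOn Z (Icc 0 rstar))
    (hLineq : ∀ r ∈ Icc (0:ℝ) rstar,
      L r ≥ L 0 - a * r + b * ∫ s in (0:ℝ)..r, ∫ t in (0:ℝ)..s, L t)
    (hZeq : ∀ r ∈ Icc (0:ℝ) rstar,
      Z r = Z 0 - a * r + b * ∫ s in (0:ℝ)..r, ∫ t in (0:ℝ)..s, Z t)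
    (h0 : Z 0 = L 0) :
    ∀ r ∈ Icc (0:ℝ) rstar, L r ≥ Z r := by
  have hsuper : ∀ r ∈ Icc (0:ℝ) rstar,
      b * ∫ s in (0:ℝ)..r, ∫ t in (0:ℝ)..s, (L t - Z t) ≤ L r - Z r := by
    intro r hr
    rw [double_integral_sub hL hZ hr]
    linarith [hLineq r hr, hZeq r hr]
  intro r hr
  exact sub_nonneg.1 (nonneg_of_le_double_integral hb.le (hL.sub hZ) hsuper r hr)

theorem stmt4 (rstar a b : ℝ) (hr : 0 ≤ rstar) (ha : 0 ≤ a) (hb : 0 < b)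
    (L Z : ℝ → ℝ)
    (hL : ContinuousOn L (Icc 0 rstar)) (hZ : ContinuousOn Z (Icc 0 rstar))
    (hLineq : ∀ r ∈ Icc (0:ℝ) rstar,
      L r ≥ L 0 - a * r + b * ∫ s in (0:ℝ)..r, ∫ t in (0:ℝ)..s, L t)
    (hZeq : ∀ r ∈ Icc (0:ℝ) rstar,
      Z r = Z 0 - a * r + b * ∫ s in (0:ℝ)..r, ∫ t in (0:ℝ)..s, Z t)
    (h0 : Z 0 = L 0) :
    ∀ r ∈ Icc (0:ℝ) rstar, L r ≥ Z r :=
  stmt4_general rstar a b hb L Z hL hZ hLineq hZeq h0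
end

section
/- Let u be a Neumann eigenfunction of the Laplacian on the unit disc D ⊂ ℝ² of the form u(r,θ) = (A cos nθ + B sin nθ)·J_n(μ r) with eigenvalue E = μ², where μ is a positive zero of J_n'. Then 2E·‖u‖²_{L²(D)} = (E − n²)·‖u‖²_{L²(∂D)}. -/
/-!
Multiplying the Bessel equation `r²J'' + rJ' + (r² - ν²)J = 0` by `2J'` (the radial form of the
Rellich identity coming from `[Δ, r∂_r] = 2Δ`) shows that `E(r) = r²J'² + (r² - ν²)J²` has
derivative `2rJ²`, so `2μ² ∫₀¹ J(μr)² r dr = E(μ) - E(0)`. The equation at `r = 0` forces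
`ν J(0) = 0`, hence `E(0) = 0`, and the Neumann condition `J'(μ) = 0` leaves
`E(μ) = (μ² - n²)J(μ)²`. The angular factor `(A cos nθ + B sin nθ)²` splits off both sides.
-/

open MeasureTheory Real

namespace Bessel

noncomputable def energy (ν : ℝ) (J : ℝ → ℝ) (s : ℝ) : ℝ :=
  s ^ 2 * deriv J s ^ 2 + (s ^ 2 - ν ^ 2) * J s ^ 2

variable {ν : ℝ} {J : ℝ → ℝ}

theorem hasDerivAt_energy {s : ℝ} (hJ : DifferentiableAt ℝ J s)
    (hJ' : DifferentiableAt ℝ (deriv J) s)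
    (hODE : s ^ 2 * deriv (deriv J) s + s * deriv J s + (s ^ 2 - ν ^ 2) * J s = 0) :
    HasDerivAt (energy ν J) (2 * s * J s ^ 2) s := by
  have hsq : HasDerivAt (fun x : ℝ => x ^ 2) (2 * s) s := by
    simpa using hasDerivAt_pow 2 s
  have h := (hsq.mul (hJ'.hasDerivAt.pow 2)).add
    ((hsq.sub_const (ν ^ 2)).mul (hJ.hasDerivAt.pow 2))
  refine h.congr_deriv ?_
  simp only [Pi.pow_apply]
  linear_combination (2 * deriv J s) * hODE

theorem energy_zero (hJ0 : ν ^ 2 * J 0 = 0) : energy ν J 0 = 0 := by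
  simp only [energy]
  linear_combination -(J 0) * hJ0

theorem two_mul_sq_mul_integral_eq_energy (hJ : Differentiable ℝ J)
    (hJ' : Differentiable ℝ (deriv J))
    (hODE : ∀ s : ℝ, s ^ 2 * deriv (deriv J) s + s * deriv J s + (s ^ 2 - ν ^ 2) * J s = 0)
    (μ : ℝ) :
    2 * μ ^ 2 * ∫ r in (0 : ℝ)..1, J (μ * r) ^ 2 * r = energy ν J μ := by
  have hderiv : ∀ r ∈ Set.uIcc (0 : ℝ) 1,
      HasDerivAt (fun r => energy ν J (μ * r)) (2 * μ ^ 2 * (J (μ * r) ^ 2 * r)) r := by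
    intro r _
    have h := (hasDerivAt_energy (hJ (μ * r)) (hJ' (μ * r)) (hODE (μ * r))).comp r
      ((hasDerivAt_id r).const_mul μ)
    exact h.congr_deriv (by ring)
  have hcont : Continuous fun r => 2 * μ ^ 2 * (J (μ * r) ^ 2 * r) := by
    have := hJ.continuous
    fun_prop
  rw [← intervalIntegral.integral_const_mul,
    intervalIntegral.integral_eq_sub_of_hasDerivAt hderiv (hcont.intervalIntegrable 0 1)]
  rw [mul_one, mul_zero, energy_zero (by linear_combination -(hODE 0)), sub_zero]

end Bessel

theorem stmt6_general (n : ℕ) (A B μ : ℝ) (J : ℝ → ℝ)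
    (hJ : ContDiff ℝ 2 J)
    (hODE : ∀ r : ℝ, r^2 * deriv (deriv J) r + r * deriv J r
      + (r^2 - (n:ℝ)^2) * J r = 0)
    (hbc : deriv J μ = 0) :
    2 * μ^2 * (∫ θ in (0:ℝ)..(2*π), ∫ r in (0:ℝ)..1,
        ((A * Real.cos (n * θ) + B * Real.sin (n * θ)) * J (μ * r))^2 * r)
    = (μ^2 - (n:ℝ)^2) * (∫ θ in (0:ℝ)..(2*π),
        ((A * Real.cos (n * θ) + B * Real.sin (n * θ)) * J (μ * 1))^2) := by
  have hJ' : ContDiff ℝ 1 (deriv J) := hJ.deriv'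
  have hradial :
      2 * μ ^ 2 * ∫ r in (0 : ℝ)..1, J (μ * r) ^ 2 * r = (μ ^ 2 - n ^ 2) * J μ ^ 2 := by
    rw [Bessel.two_mul_sq_mul_integral_eq_energy (hJ.differentiable two_ne_zero)
      (hJ'.differentiable one_ne_zero) hODE μ, Bessel.energy, hbc]
    ring
  have hsplit : ∀ a : ℝ, ∫ r in (0 : ℝ)..1, (a * J (μ * r)) ^ 2 * r
      = a ^ 2 * ∫ r in (0 : ℝ)..1, J (μ * r) ^ 2 * r := fun a => by
    rw [← intervalIntegral.integral_const_mul]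
    congr 1 with r
    ring
  simp only [hsplit]
  simp only [mul_one, mul_pow, intervalIntegral.integral_mul_const]
  linear_combination
    (∫ θ in (0 : ℝ)..2 * π, (A * Real.cos (n * θ) + B * Real.sin (n * θ)) ^ 2) * hradial

/-- A Neumann eigenfunction `u(r,θ) = (A cos nθ + B sin nθ) Jₙ(μ r)` on the unit
disc, where `J` satisfies the Bessel equation of order `n` and `J'(μ) = 0`,
satisfies `2E‖u‖²_{L²(D)} = (E - n²)‖u‖²_{L²(∂D)}` with `E = μ²`, where the
`L²` norms are written out in polar coordinates. -/
theorem stmt6 (n : ℕ) (A B μ : ℝ) (hμ : 0 < μ) (J : ℝ → ℝ)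
    (hJ : ContDiff ℝ 2 J)
    (hODE : ∀ r : ℝ, r^2 * deriv (deriv J) r + r * deriv J r
      + (r^2 - (n:ℝ)^2) * J r = 0)
    (hbc : deriv J μ = 0) :
    2 * μ^2 * (∫ θ in (0:ℝ)..(2*π), ∫ r in (0:ℝ)..1,
        ((A * Real.cos (n * θ) + B * Real.sin (n * θ)) * J (μ * r))^2 * r)
    = (μ^2 - (n:ℝ)^2) * (∫ θ in (0:ℝ)..(2*π),
        ((A * Real.cos (n * θ) + B * Real.sin (n * θ)) * J (μ * 1))^2) :=
  stmt6_general n A B μ J hJ hODE hbc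
end

section
/- Let P be a self-adjoint operator on a Hilbert space with spectrum contained in (−∞, 1], let h ∈ (0,1], M ≥ 1, and f_M(t) = χ(−t/(M²h^{2/3})) with χ smooth, 0 ≤ χ ≤ 1, χ(s) = 0 for s ≤ 1, χ(s) = 1 for s ≥ 2. Suppose that for some v in the Hilbert space and some constant C₀, ⟨f_{M'}(P)v, v⟩ ≤ C₀·h^{−2/3}·(M')^{−3} for all M' ≥ M. Then ⟨f_M(P)·P·v, v⟩ ≥ −16·C₀·M^{−1}. -/
open scoped ComplexInnerProductSpace

set_option maxHeartbeats 1000000 in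
theorem stmt11 {H : Type*} [NormedAddCommGroup H] [InnerProductSpace ℂ H]
    [CompleteSpace H] (P : H →L[ℂ] H) (hP : IsSelfAdjoint P)
    (hspec : spectrum ℝ P ⊆ Set.Iic 1)
    (χ : ℝ → ℝ) (hχ : ContDiff ℝ (⊤ : ℕ∞) χ)
    (hrange : ∀ t, χ t ∈ Set.Icc (0:ℝ) 1)
    (hχ0 : ∀ s : ℝ, s ≤ 1 → χ s = 0)
    (hχ1 : ∀ s : ℝ, 2 ≤ s → χ s = 1)
    (h M C₀ : ℝ) (hh : 0 < h) (hh1 : h ≤ 1) (hM : 1 ≤ M) (v : H)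
    (hyp : ∀ M' : ℝ, M ≤ M' →
      (⟪cfc (fun t : ℝ => χ (-t / (M'^2 * h ^ ((2:ℝ)/3)))) P v, v⟫).re
        ≤ C₀ * h ^ (-(2:ℝ)/3) * M' ^ (-(3:ℝ))) :
    (⟪cfc (fun t : ℝ => χ (-t / (M^2 * h ^ ((2:ℝ)/3))) * t) P v, v⟫).re
      ≥ -16 * C₀ * M⁻¹ := by
  set c : ℝ := h ^ ((2:ℝ)/3) with hc
  have hc0 : 0 < c := Real.rpow_pos_of_pos hh _
  have hM0 : (0:ℝ) < M := lt_of_lt_of_le one_pos hM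
  set R : ℝ := ‖P‖ * ‖(1 : H →L[ℂ] H)‖ with hR
  have hR0 : 0 ≤ R := mul_nonneg (norm_nonneg _) (norm_nonneg _)
  -- continuity of the cutoffs
  have hcont : ∀ m : ℝ, 0 < m → Continuous (fun t : ℝ => χ (-t / (m^2 * c))) := by
    intro m hm
    exact hχ.continuous.comp (by fun_prop)
  -- inner products of nonneg functions are nonneg
  have hinner : ∀ g : ℝ → ℝ, (∀ x ∈ spectrum ℝ P, 0 ≤ g x) →
      0 ≤ (⟪cfc g P v, v⟫).re := by
    intro g hg
    have h1 : (0 : H →L[ℂ] H) ≤ cfc g P := cfc_nonneg hg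
    exact (Complex.nonneg_iff.mp (((ContinuousLinearMap.nonneg_iff_isPositive _).mp h1).inner_nonneg_left v)).1
  -- cutoffs vanish on the spectrum once m is large
  have hzero : ∀ m : ℝ, 0 < m → R ≤ m^2 * c → ∀ t ∈ spectrum ℝ P,
      χ (-t / (m^2 * c)) = 0 := by
    intro m hm hbig t ht
    apply hχ0
    have hnorm : ‖t‖ ≤ R := spectrum.norm_le_norm_mul_of_mem ht
    rw [Real.norm_eq_abs] at hnorm
    have hmt : -t ≤ m^2 * c := le_trans (neg_le_abs t) (le_trans hnorm hbig)
    rw [div_le_one (by positivity)]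
    exact hmt
  have hczero : ∀ m : ℝ, 0 < m → R ≤ m^2 * c →
      cfc (fun t : ℝ => χ (-t / (m^2 * c))) P = 0 := by
    intro m hm hbig
    have : cfc (fun t : ℝ => χ (-t / (m^2 * c))) P = cfc (0 : ℝ → ℝ) P :=
      cfc_congr (fun t ht => hzero m hm hbig t ht)
    rw [this, cfc_zero]
  -- C₀ is nonnegative
  have hC₀ : 0 ≤ C₀ := by
    have hx : 0 ≤ R / c := div_nonneg hR0 hc0.le
    have hm1 : M ≤ M + R / c := by linarith
    have hm0 : (0:ℝ) < M + R / c := by linarith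
    have h2 : (R / c) * c = R := div_mul_cancel₀ _ hc0.ne'
    have h3 : R / c ≤ (M + R / c)^2 := by nlinarith
    have hbig : R ≤ (M + R / c)^2 * c := by
      calc R = (R / c) * c := h2.symm
        _ ≤ (M + R / c)^2 * c := mul_le_mul_of_nonneg_right h3 hc0.le
    have hy := hyp (M + R / c) hm1
    rw [hczero (M + R / c) hm0 hbig] at hy
    simp only [ContinuousLinearMap.zero_apply, inner_zero_left, Complex.zero_re] at hy
    have hp1 : (0:ℝ) < h ^ (-(2:ℝ)/3) := Real.rpow_pos_of_pos hh _
    have hp2 : (0:ℝ) < (M + R / c) ^ (-(3:ℝ)) := Real.rpow_pos_of_pos hm0 _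
    nlinarith [mul_pos hp1 hp2]
  -- the key dyadic induction
  have key : ∀ n : ℕ, ∀ M' : ℝ, M ≤ M' → R ≤ M'^2 * c * 4^n →
      -16 * C₀ / M' ≤ (⟪cfc (fun t : ℝ => χ (-t / (M'^2 * c)) * t) P v, v⟫).re := by
    intro n
    induction n with
    | zero =>
      intro M' hMM' hb
      have hM'0 : (0:ℝ) < M' := lt_of_lt_of_le hM0 hMM'
      have hb' : R ≤ M'^2 * c := by simpa using hb
      have hcfc : cfc (fun t : ℝ => χ (-t / (M'^2 * c)) * t) P = cfc (0 : ℝ → ℝ) P := by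
        apply cfc_congr
        intro t ht
        simp [hzero M' hM'0 hb' t ht]
      rw [hcfc, cfc_zero]
      simp only [ContinuousLinearMap.zero_apply, inner_zero_left, Complex.zero_re]
      have h1 : (0:ℝ) ≤ 16 * C₀ / M' := div_nonneg (by linarith) hM'0.le
      have h2 : -16 * C₀ / M' = -(16 * C₀ / M') := by ring
      rw [h2]
      linarith
    | succ n ih =>
      intro M' hMM' hb
      have hM'0 : (0:ℝ) < M' := lt_of_lt_of_le hM0 hMM'
      have hM'1 : (1:ℝ) ≤ M' := hM.trans hMM'
      have hIH := ih (2 * M') (by linarith)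
        (by rw [show (2*M')^2 * c * 4^n = M'^2 * c * 4^(n+1) by ring]; exact hb)
      set g : ℝ → ℝ := fun t => χ (-t / (M'^2 * c)) - χ (-t / ((2*M')^2 * c)) with hg
      have hgc : Continuous g := (hcont M' hM'0).sub (hcont (2*M') (by linarith))
      -- quarter relation
      have hquarter : ∀ t : ℝ, -t / ((2*M')^2 * c) = (-t / (M'^2 * c)) / 4 := by
        intro t
        rw [show (2*M')^2 * c = (M'^2 * c) * 4 by ring, ← div_div]
      -- pointwise nonnegativity of g
      have hg0 : ∀ t : ℝ, 0 ≤ g t := by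
        intro t
        simp only [hg]
        rcases le_or_gt (-t / ((2*M')^2 * c)) 1 with hle | hgt
        · rw [hχ0 _ hle, sub_zero]; exact (hrange _).1
        · have h4 : (2:ℝ) ≤ -t / (M'^2 * c) := by
            rw [hquarter t] at hgt; linarith
          rw [hχ1 _ h4]
          linarith [(hrange (-t / ((2*M')^2 * c))).2]
      -- pointwise lower bound for g t * t
      have hgt2 : ∀ t : ℝ, 0 ≤ g t * t + 8 * M'^2 * c * g t := by
        intro t
        rcases le_or_gt 0 (t + 8 * M'^2 * c) with hle | hlt
        · nlinarith [hg0 t]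
        · have ht8 : 8 * M'^2 * c < -t := by linarith
          have h2le : (2:ℝ) ≤ -t / ((2*M')^2 * c) := by
            rw [le_div_iff₀ (by positivity)]
            nlinarith
          have h2le' : (2:ℝ) ≤ -t / (M'^2 * c) := by
            rw [le_div_iff₀ (by positivity)]
            nlinarith
          have hgz : g t = 0 := by simp [hg, hχ1 _ h2le, hχ1 _ h2le']
          simp [hgz]
      -- splitting the cfc
      have hsplit : cfc (fun t : ℝ => χ (-t / (M'^2 * c)) * t) P =
          cfc (fun t : ℝ => χ (-t / ((2*M')^2 * c)) * t) P + cfc (fun t : ℝ => g t * t) P := by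
        rw [← cfc_add P (fun t : ℝ => χ (-t / ((2*M')^2 * c)) * t) (fun t : ℝ => g t * t)
            (((hcont (2*M') (by linarith)).mul continuous_id').continuousOn)
            ((hgc.mul continuous_id').continuousOn)]
        apply cfc_congr
        intro t _
        simp only [hg]
        ring
      -- lower bound on the g-part
      have hgpart : -(8 * M'^2 * c) * (⟪cfc g P v, v⟫).re ≤
          (⟪cfc (fun t : ℝ => g t * t) P v, v⟫).re := by
        have h1 : 0 ≤ (⟪cfc (fun t : ℝ => g t * t + 8 * M'^2 * c * g t) P v, v⟫).re :=
          hinner _ (fun x _ => hgt2 x)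
        have h2 : cfc (fun t : ℝ => g t * t + 8 * M'^2 * c * g t) P =
            cfc (fun t : ℝ => g t * t) P + (8 * M'^2 * c) • cfc g P := by
          rw [← cfc_const_mul (8 * M'^2 * c) g P hgc.continuousOn,
            ← cfc_add P (fun t : ℝ => g t * t) (fun t : ℝ => 8 * M'^2 * c * g t)
              ((hgc.mul continuous_id').continuousOn)
              ((continuous_const.mul hgc).continuousOn)]
        rw [h2, ContinuousLinearMap.add_apply, inner_add_left, Complex.add_re,
          ContinuousLinearMap.smul_apply,
          show (8 * M'^2 * c) • (cfc g P v) = ((8 * M'^2 * c : ℝ) : ℂ) • (cfc g P v) from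
            (algebraMap_smul ℂ _ _).symm,
          inner_smul_left] at h1
        simp only [Complex.star_def, Complex.conj_ofReal, Complex.mul_re, Complex.ofReal_re,
          Complex.ofReal_im, zero_mul, sub_zero] at h1
        nlinarith
      -- upper bound on ⟪cfc g v, v⟫
      have hgub : (⟪cfc g P v, v⟫).re ≤ C₀ * h ^ (-(2:ℝ)/3) * M' ^ (-(3:ℝ)) := by
        have hsub : cfc g P = cfc (fun t : ℝ => χ (-t / (M'^2 * c))) P -
            cfc (fun t : ℝ => χ (-t / ((2*M')^2 * c))) P := by
          rw [← cfc_sub (fun t : ℝ => χ (-t / (M'^2 * c)))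
            (fun t : ℝ => χ (-t / ((2*M')^2 * c))) P
            ((hcont M' hM'0).continuousOn)
            ((hcont (2*M') (by linarith)).continuousOn)]
        have hnn : 0 ≤ (⟪cfc (fun t : ℝ => χ (-t / ((2*M')^2 * c))) P v, v⟫).re :=
          hinner _ (fun x _ => (hrange _).1)
        have hhyp := hyp M' hMM'
        rw [hsub, ContinuousLinearMap.sub_apply, inner_sub_left, Complex.sub_re]
        linarith
      -- combine
      rw [hsplit, ContinuousLinearMap.add_apply, inner_add_left, Complex.add_re]
      have hch : c * h ^ (-(2:ℝ)/3) = 1 := by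
        rw [hc, ← Real.rpow_add hh]
        norm_num
      have hm3 : M' ^ (-(3:ℝ)) = (M'^3)⁻¹ := by
        rw [← Real.rpow_natCast M' 3, ← Real.rpow_neg hM'0.le]
        norm_num
      have hm2 : M'^2 * (M'^3)⁻¹ = M'⁻¹ := by
        field_simp
      have hprod : 8 * M'^2 * c * (C₀ * h ^ (-(2:ℝ)/3) * M' ^ (-(3:ℝ))) = 8 * C₀ / M' := by
        rw [hm3]
        calc 8 * M'^2 * c * (C₀ * h ^ (-(2:ℝ)/3) * (M'^3)⁻¹)
            = 8 * C₀ * (c * h ^ (-(2:ℝ)/3)) * (M'^2 * (M'^3)⁻¹) := by ring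
          _ = 8 * C₀ * M'⁻¹ := by rw [hch, hm2]; ring
          _ = 8 * C₀ / M' := by rw [div_eq_mul_inv]
      have hstep : -(8 * C₀ / M') ≤ -(8 * M'^2 * c) * (⟪cfc g P v, v⟫).re := by
        have hmm := mul_le_mul_of_nonneg_left hgub
          (by positivity : (0:ℝ) ≤ 8 * M'^2 * c)
        rw [hprod] at hmm
        nlinarith
      have harith : -16 * C₀ / M' = -16 * C₀ / (2 * M') + -(8 * C₀ / M') := by
        field_simp
        ring
      rw [harith]
      exact add_le_add hIH (le_trans hstep hgpart)
  -- conclude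
  obtain ⟨n, hn⟩ : ∃ n : ℕ, R / (M^2 * c) < 4^n :=
    pow_unbounded_of_one_lt _ (by norm_num)
  have hbound : R ≤ M^2 * c * 4^n := by
    rw [div_lt_iff₀ (by positivity)] at hn
    nlinarith
  have hfin := key n M le_rfl hbound
  rw [ge_iff_le, show -16 * C₀ * M⁻¹ = -16 * C₀ / M by rw [div_eq_mul_inv]]
  exact hfin
end

section
/- Let A be a self-adjoint operator with orthonormal eigenbasis (u_j) and eigenvalues E_j, let E ∈ ℝ, let E_J be a closest eigenvalue to E and E_* the closest eigenvalue distinct from E_J, and let Π_J be the orthogonal projection onto the E_J-eigenspace. Then for any u in the domain, ‖u − Π_J u‖ ≤ ‖(A − E)u‖ / |E − E_*|. -/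
/-!
Expand in the eigenbasis. On the `E_J`-eigenspace `u - p` has no component, while for every
other basis vector `u_j` the coefficient of `u - p` is that of `u`, and self-adjointness gives
`⟪u_j, (A - E) u⟫ = (E_j - E) ⟪u_j, u⟫` with `|E_j - E| ≥ |E - E_*|`. Hence every coefficient of
`(E - E_*) (u - p)` is dominated by the corresponding one of `(A - E) u`, and Parseval compares
the norms.
-/

open scoped RealInnerProductSpace InnerProductSpace

theorem HilbertBasis.norm_le_norm_of_forall_norm_inner_le {ι 𝕜 E : Type*} [RCLike 𝕜]
    [NormedAddCommGroup E] [InnerProductSpace 𝕜 E] (b : HilbertBasis ι 𝕜 E) {x y : E}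
    (h : ∀ i, ‖⟪b i, x⟫_𝕜‖ ≤ ‖⟪b i, y⟫_𝕜‖) : ‖x‖ ≤ ‖y‖ := by
  rw [← b.repr.norm_map x, ← b.repr.norm_map y]
  exact lp.norm_mono two_ne_zero fun i => by simpa only [b.repr_apply_apply] using h i

theorem LinearMap.IsSymmetric.inner_eq_zero_of_eigenvalue_ne {𝕜 E : Type*} [RCLike 𝕜]
    [NormedAddCommGroup E] [InnerProductSpace 𝕜 E] {T : E →ₗ[𝕜] E} (hT : T.IsSymmetric)
    {μ ν : 𝕜} {x y : E} (hx : T x = μ • x) (hy : T y = ν • y) (hμν : μ ≠ ν) :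
    ⟪x, y⟫_𝕜 = 0 :=
  hT.orthogonalFamily_eigenspaces hμν ⟨x, Module.End.mem_eigenspace_iff.2 hx⟩
    ⟨y, Module.End.mem_eigenspace_iff.2 hy⟩

theorem LinearMap.IsSymmetric.inner_eigenvector_sub_smul {E : Type*} [NormedAddCommGroup E]
    [InnerProductSpace ℝ E] {T : E →ₗ[ℝ] E} (hT : T.IsSymmetric) {μ : ℝ} {y : E}
    (hy : T y = μ • y) (c : ℝ) (x : E) : ⟪y, T x - c • x⟫ = (μ - c) * ⟪y, x⟫ := by
  rw [inner_sub_right, ← hT, hy, real_inner_smul_left, real_inner_smul_right]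
  ring

theorem stmt16 {H : Type*} [NormedAddCommGroup H] [InnerProductSpace ℝ H]
    [CompleteSpace H] {ι : Type*} (b : HilbertBasis ι ℝ H)
    (A : H →L[ℝ] H) (hA : IsSelfAdjoint A)
    (Ev : ι → ℝ) (heig : ∀ j, A (b j) = Ev j • b j)
    (E : ℝ) (J : ι) (hJ : ∀ j, |E - Ev J| ≤ |E - Ev j|)
    (Estar : ℝ) (hstar_ev : ∃ j, Ev j = Estar) (hne : Estar ≠ Ev J)
    (hclosest : ∀ j, Ev j ≠ Ev J → |E - Estar| ≤ |E - Ev j|)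
    (u p : H) (hp : A p = Ev J • p)
    (hperp : ∀ q : H, A q = Ev J • q → ⟪u - p, q⟫ = 0) :
    ‖u - p‖ ≤ ‖A u - E • u‖ / |E - Estar| := by
  have hsym := hA.isSymmetric
  -- `E = E_*` would make `E_*` a closest eigenvalue, forcing `E_J = E_*`.
  have hgap : 0 < |E - Estar| := by
    obtain ⟨j, rfl⟩ := hstar_ev
    refine abs_pos.2 (sub_ne_zero.2 fun hE => hne ?_)
    have h := hJ j
    rwa [hE, sub_self, abs_zero, abs_nonpos_iff, sub_eq_zero] at h
  rw [le_div_iff₀ hgap, mul_comm, ← Real.norm_eq_abs, ← norm_smul]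
  refine b.norm_le_norm_of_forall_norm_inner_le fun j => ?_
  have hcoef : ⟪b j, A u - E • u⟫ = (Ev j - E) * ⟪b j, u⟫ :=
    hsym.inner_eigenvector_sub_smul (heig j) E u
  simp only [real_inner_smul_right, hcoef, norm_mul, Real.norm_eq_abs]
  by_cases hj : Ev j = Ev J
  · rw [real_inner_comm, hperp (b j) (by rw [heig j, hj]), abs_zero, mul_zero]
    positivity
  · have hpj : ⟪b j, p⟫ = 0 := hsym.inner_eq_zero_of_eigenvalue_ne (heig j) hp hj
    rw [inner_sub_right, hpj, sub_zero, abs_sub_comm (Ev j)]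
    exact mul_le_mul_of_nonneg_right (hclosest j hj) (abs_nonneg _)
end
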